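/- arXiv:1207.3404 — 8 statements merged into one kernel-verified Lean document; each statement's English description precedes it below -/
import Mathlib

section
/- If h(z) = z - z²/2 and g(z) = z²/2 - z³/3, then the harmonic function f = h + conj(g) satisfies f(z₀) = f(conj(z₀)) = 3/4 for z₀ = (3 + √3 i)/4, and |z₀| < 1; hence f is not injective on the unit disk. -/
/-!
Both `z₀ = (3 + √3 i)/4` and `conj z₀` are roots of `4z² - 6z + 3`. Reducing modulo this
quadratic gives `h z = z/4 + 3/8` and `g z = z/4`, so at either root
`f z = 3/8 + (z + conj z)/4 = 3/8 + (Re z)/2 = 3/4`. Since `z₀` is not real, `f` takes the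
value `3/4` at two distinct points of the disk.
-/

open Complex Metric ComplexConjugate

section QuadraticRoot

variable {z : ℂ}

lemma conj_root_of_root (hz : 4 * z ^ 2 - 6 * z + 3 = 0) :
    4 * conj z ^ 2 - 6 * conj z + 3 = 0 := by
  simpa [map_ofNat] using congrArg conj hz

lemma sub_sq_div_two_eq_of_root (hz : 4 * z ^ 2 - 6 * z + 3 = 0) :
    z - z ^ 2 / 2 = z / 4 + 3 / 8 := by
  linear_combination (-1 / 8 : ℂ) * hz

lemma sq_div_two_sub_cube_div_three_eq_of_root (hz : 4 * z ^ 2 - 6 * z + 3 = 0) :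
    z ^ 2 / 2 - z ^ 3 / 3 = z / 4 := by
  linear_combination (-z / 12) * hz

lemma harmonic_eq_of_root (hz : 4 * z ^ 2 - 6 * z + 3 = 0) :
    z - z ^ 2 / 2 + conj (z ^ 2 / 2 - z ^ 3 / 3) = 3 / 8 + z.re / 2 := by
  rw [sub_sq_div_two_eq_of_root hz, sq_div_two_sub_cube_div_three_eq_of_root hz, map_div₀,
    map_ofNat]
  have hsum : z + conj z = 2 * z.re := by rw [add_conj]; push_cast; rfl
  linear_combination hsum / 4

end QuadraticRoot

lemma three_add_sqrt_three_mul_I_div_four_isRoot :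
    4 * ((3 + √3 * I) / 4) ^ 2 - 6 * ((3 + √3 * I) / 4) + 3 = 0 := by
  have hsqrt : ((√3 : ℝ) : ℂ) ^ 2 = 3 := by exact_mod_cast Real.sq_sqrt zero_le_three
  linear_combination (I ^ 2 / 4) * hsqrt + (3 / 4 : ℂ) * I_sq

lemma re_three_add_sqrt_three_mul_I_div_four : ((3 + √3 * I) / 4).re = 3 / 4 := by
  simp

lemma im_three_add_sqrt_three_mul_I_div_four : ((3 + √3 * I) / 4).im = √3 / 4 := by
  simp

lemma norm_three_add_sqrt_three_mul_I_div_four : ‖(3 + √3 * I) / 4‖ < 1 := by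
  rw [← sq_lt_one_iff₀ (norm_nonneg _), Complex.sq_norm, normSq_apply,
    re_three_add_sqrt_three_mul_I_div_four, im_three_add_sqrt_three_mul_I_div_four]
  nlinarith [Real.sq_sqrt (zero_le_three : (0 : ℝ) ≤ 3)]

lemma not_injOn_ball_of_map_conj_eq {f : ℂ → ℂ} {r : ℝ} {z : ℂ} (hz : ‖z‖ < r) (him : z.im ≠ 0)
    (hfz : f (conj z) = f z) : ¬ Set.InjOn f (ball 0 r) := fun hinj =>
  him (conj_eq_iff_im.1 (hinj (by simpa using hz) (by simpa using hz) hfz))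

theorem stmt0
    (h g f : ℂ → ℂ)
    (hh : ∀ z, h z = z - z ^ 2 / 2)
    (hg : ∀ z, g z = z ^ 2 / 2 - z ^ 3 / 3)
    (hf : ∀ z, f z = h z + (starRingEnd ℂ) (g z))
    (z₀ : ℂ) (hz₀ : z₀ = (3 + Real.sqrt 3 * I) / 4) :
    f z₀ = 3 / 4 ∧ f ((starRingEnd ℂ) z₀) = 3 / 4 ∧ ‖z₀‖ < 1 ∧
      ¬ Set.InjOn f (ball (0 : ℂ) 1) := by
  have hroot : 4 * z₀ ^ 2 - 6 * z₀ + 3 = 0 := hz₀ ▸ three_add_sqrt_three_mul_I_div_four_isRoot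
  have hre : z₀.re = 3 / 4 := hz₀ ▸ re_three_add_sqrt_three_mul_I_div_four
  have hf_root : ∀ z, 4 * z ^ 2 - 6 * z + 3 = 0 → f z = 3 / 8 + z.re / 2 := fun z hz => by
    rw [hf, hh, hg, harmonic_eq_of_root hz]
  have hfz₀ : f z₀ = 3 / 4 := by
    rw [hf_root z₀ hroot, hre]; norm_num
  have hfz₀' : f (conj z₀) = 3 / 4 := by
    rw [hf_root _ (conj_root_of_root hroot), conj_re, hre]; norm_num
  have hnorm : ‖z₀‖ < 1 := hz₀ ▸ norm_three_add_sqrt_three_mul_I_div_four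
  have him : z₀.im ≠ 0 := by
    rw [hz₀, im_three_add_sqrt_three_mul_I_div_four]; positivity
  exact ⟨hfz₀, hfz₀', hnorm, not_injOn_ball_of_map_conj_eq hnorm him (hfz₀'.trans hfz₀.symm)⟩
end

section
/- Let α ∈ ℂ with |α| ≤ 1/3, and let (aₙ)_{n≥2} be complex numbers with Σ_{n≥2} n²|aₙ| ≤ 1. Define bₙ = α((n-1)/n)a_{n-1} for n ≥ 2 (with a₁ = 1). Then Σ_{n≥2} n(|aₙ| + |bₙ|) ≤ (1 + 3|α|)/2 ≤ 1. -/
theorem stmt3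
    (α : ℂ) (hα : ‖α‖ ≤ 1 / 3)
    (a b : ℕ → ℂ) (ha1 : a 1 = 1)
    (hb : ∀ n : ℕ, 2 ≤ n → b n = α * (((n : ℂ) - 1) / n) * a (n - 1))
    (hsum : Summable fun k : ℕ => (((k : ℝ) + 2) ^ 2) * ‖a (k + 2)‖)
    (hbound : (∑' k : ℕ, (((k : ℝ) + 2) ^ 2) * ‖a (k + 2)‖) ≤ 1) :
    (∑' k : ℕ, ((k : ℝ) + 2) * (‖a (k + 2)‖ + ‖b (k + 2)‖)) ≤ (1 + 3 * ‖α‖) / 2 ∧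
      (1 + 3 * ‖α‖) / 2 ≤ 1 := by
  have hα0 : 0 ≤ ‖α‖ := norm_nonneg _
  set f : ℕ → ℝ := fun k => ((k : ℝ) + 2) * ‖a (k + 2)‖ with hf
  set u : ℕ → ℝ := fun k => ((k : ℝ) + 1) * ‖a (k + 1)‖ with hu
  have hfnn : ∀ k, 0 ≤ f k := fun k => mul_nonneg (by positivity) (norm_nonneg _)
  have hfg : ∀ k, 2 * f k ≤ ((k : ℝ) + 2) ^ 2 * ‖a (k + 2)‖ := by
    intro k
    have h1 : (0:ℝ) ≤ (k:ℝ) := Nat.cast_nonneg k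
    have h2 : (0:ℝ) ≤ ‖a (k + 2)‖ := norm_nonneg _
    simp only [hf]
    nlinarith [mul_nonneg (mul_nonneg h1 (by linarith : (0:ℝ) ≤ (k:ℝ) + 2)) h2]
  have hfsum : Summable f := by
    refine hsum.of_nonneg_of_le hfnn (fun k => ?_)
    have := hfg k
    have := hfnn k
    linarith
  have hS : (∑' k, f k) ≤ 1 / 2 := by
    have h2 : (∑' k, 2 * f k) ≤ ∑' k : ℕ, ((k : ℝ) + 2) ^ 2 * ‖a (k + 2)‖ :=
      Summable.tsum_le_tsum hfg (hfsum.mul_left 2) hsum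
    rw [tsum_mul_left] at h2
    linarith
  have hS0 : 0 ≤ ∑' k, f k := tsum_nonneg hfnn
  have hshift : (fun k => u (k + 1)) = f := by
    funext k
    simp only [hu, hf]
    push_cast
    ring_nf
  have husum : Summable u := by
    rw [← summable_nat_add_iff 1, hshift]
    exact hfsum
  have hbn : ∀ k : ℕ, ((k : ℝ) + 2) * ‖b (k + 2)‖ = ‖α‖ * u k := by
    intro k
    rw [hb (k + 2) (by omega)]
    have h1 : ((((k:ℕ) + 2 : ℕ) : ℂ) - 1) = ((k : ℝ) + 1 : ℝ) := by push_cast; ring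
    have h2 : (((k:ℕ) + 2 : ℕ) : ℂ) = ((k : ℝ) + 2 : ℝ) := by push_cast; ring
    have h3 : (k + 2) - 1 = k + 1 := rfl
    rw [h1, h2, h3]
    rw [norm_mul, norm_mul, norm_div, Complex.norm_real, Complex.norm_real]
    have p1 : (0:ℝ) ≤ (k : ℝ) + 1 := by positivity
    have p2 : (0:ℝ) < (k : ℝ) + 2 := by positivity
    rw [Real.norm_of_nonneg p1, Real.norm_of_nonneg p2.le]
    simp only [hu]
    field_simp
  have hU : (∑' k, u k) = 1 + ∑' k, f k := by
    rw [Summable.tsum_eq_zero_add husum]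
    congr 1
    · simp [hu, ha1]
    · rw [hshift]
  have hmain : (∑' k : ℕ, ((k : ℝ) + 2) * (‖a (k + 2)‖ + ‖b (k + 2)‖))
      = (∑' k, f k) + ‖α‖ * (∑' k, u k) := by
    have key : ∀ k : ℕ, ((k : ℝ) + 2) * (‖a (k + 2)‖ + ‖b (k + 2)‖) = f k + ‖α‖ * u k := by
      intro k
      rw [mul_add, hbn k]
    simp_rw [key]
    rw [Summable.tsum_add hfsum (husum.mul_left _), tsum_mul_left]
  constructor
  · rw [hmain, hU]
    nlinarith
  · linarith
end

section
/- Let α ∈ ℂ with |α| ≤ 2/11, and let (aₙ)_{n≥2} be complex numbers with Σ_{n≥2} n³|aₙ| ≤ 1. Define bₙ = α((n-1)/n)a_{n-1} for n ≥ 2 (with a₁ = 1). Then Σ_{n≥2} n²(|aₙ| + |bₙ|) ≤ (2 + 11|α|)/4 ≤ 1. -/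
theorem stmt4
    (α : ℂ) (hα : ‖α‖ ≤ 2 / 11)
    (a b : ℕ → ℂ) (ha1 : a 1 = 1)
    (hb : ∀ n : ℕ, 2 ≤ n → b n = α * (((n : ℂ) - 1) / n) * a (n - 1))
    (hsum : Summable fun k : ℕ => (((k : ℝ) + 2) ^ 3) * ‖a (k + 2)‖)
    (hbound : (∑' k : ℕ, (((k : ℝ) + 2) ^ 3) * ‖a (k + 2)‖) ≤ 1) :
    (∑' k : ℕ, (((k : ℝ) + 2) ^ 2) * (‖a (k + 2)‖ + ‖b (k + 2)‖)) ≤ (2 + 11 * ‖α‖) / 4 ∧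
      (2 + 11 * ‖α‖) / 4 ≤ 1 := by
  have hA0 : (0:ℝ) ≤ ∑' k : ℕ, (((k : ℝ) + 2) ^ 3) * ‖a (k + 2)‖ :=
    tsum_nonneg fun k => by positivity
  -- norm of b
  have hbn : ∀ k : ℕ, (((k:ℝ)+2)^2) * ‖b (k+2)‖
      = ‖α‖ * ((((k:ℝ)+2)*((k:ℝ)+1)) * ‖a (k+1)‖) := by
    intro k
    rw [hb (k+2) (by omega)]
    have h1 : ((((k+2:ℕ)):ℂ) - 1) = ((k:ℂ)+1) := by push_cast; ring
    have h2 : (k+2-1 : ℕ) = k+1 := by omega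
    rw [h1, h2, norm_mul, norm_mul, norm_div]
    have e1 : ‖((k:ℂ)+1)‖ = (k:ℝ)+1 := by
      rw [show ((k:ℂ)+1) = ((k+1:ℕ):ℂ) by push_cast; ring, Complex.norm_natCast]
      push_cast; ring
    have e2 : ‖(((k+2:ℕ)):ℂ)‖ = (k:ℝ)+2 := by
      rw [Complex.norm_natCast]; push_cast; ring
    rw [e1, e2]
    have : ((k:ℝ)+2) ≠ 0 := by positivity
    field_simp
  set g : ℕ → ℝ := fun k => (((k:ℝ)+2)*((k:ℝ)+1)) * ‖a (k+1)‖ with hgdef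
  have hgnn : ∀ k, 0 ≤ g k := fun k => by positivity
  have hg1 : Summable (fun k : ℕ => g (k+1)) := by
    refine hsum.of_nonneg_of_le (fun k => hgnn _) (fun k => ?_)
    simp only [hgdef]
    push_cast
    have hk : (0:ℝ) ≤ (k:ℝ) := Nat.cast_nonneg k
    have : ((k:ℝ)+1+2)*((k:ℝ)+1+1) ≤ ((k:ℝ)+2)^3 := by
      nlinarith [pow_nonneg hk 3, sq_nonneg ((k:ℝ))]
    exact mul_le_mul_of_nonneg_right this (norm_nonneg _)
  have hgsum : Summable g := (summable_nat_add_iff 1).mp hg1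
  have hS1 : Summable (fun k : ℕ => (((k:ℝ)+2)^2) * ‖a (k+2)‖) := by
    refine hsum.of_nonneg_of_le (fun k => by positivity) (fun k => ?_)
    have hk : (0:ℝ) ≤ (k:ℝ) := Nat.cast_nonneg k
    have : ((k:ℝ)+2)^2 ≤ ((k:ℝ)+2)^3 := by
      nlinarith [pow_nonneg hk 3, sq_nonneg ((k:ℝ))]
    exact mul_le_mul_of_nonneg_right this (norm_nonneg _)
  have heq2 : (fun k : ℕ => (((k:ℝ)+2)^2) * ‖b (k+2)‖) = fun k => ‖α‖ * g k :=
    funext fun k => hbn k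
  have hS2 : Summable (fun k : ℕ => (((k:ℝ)+2)^2) * ‖b (k+2)‖) := by
    rw [heq2]; exact hgsum.mul_left _
  -- split main sum
  have hsplit : (∑' k : ℕ, (((k : ℝ) + 2) ^ 2) * (‖a (k + 2)‖ + ‖b (k + 2)‖))
      = (∑' k : ℕ, (((k:ℝ)+2)^2) * ‖a (k+2)‖) + (∑' k : ℕ, (((k:ℝ)+2)^2) * ‖b (k+2)‖) := by
    rw [← Summable.tsum_add hS1 hS2]
    congr 1; funext k; ring
  -- bound first sum
  have hT1 : (∑' k : ℕ, (((k:ℝ)+2)^2) * ‖a (k+2)‖)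
      ≤ (1/2) * ∑' k : ℕ, (((k : ℝ) + 2) ^ 3) * ‖a (k + 2)‖ := by
    rw [← tsum_mul_left]
    apply Summable.tsum_le_tsum _ hS1 (hsum.mul_left _)
    intro k
    have hk : (0:ℝ) ≤ (k:ℝ) := Nat.cast_nonneg k
    have h2 : (2:ℝ) ≤ (k:ℝ)+2 := by linarith
    have : ((k:ℝ)+2)^2 ≤ (1/2) * ((k:ℝ)+2)^3 := by nlinarith [sq_nonneg ((k:ℝ)+2)]
    calc (((k:ℝ)+2)^2) * ‖a (k+2)‖ ≤ ((1/2) * ((k:ℝ)+2)^3) * ‖a (k+2)‖ :=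
          mul_le_mul_of_nonneg_right this (norm_nonneg _)
      _ = (1/2) * ((((k:ℝ)+2)^3) * ‖a (k+2)‖) := by ring
  have hT1' : (∑' k : ℕ, (((k:ℝ)+2)^2) * ‖a (k+2)‖) ≤ 1/2 := by
    calc _ ≤ (1/2) * ∑' k : ℕ, (((k : ℝ) + 2) ^ 3) * ‖a (k + 2)‖ := hT1
      _ ≤ 1/2 := by linarith
  -- bound second sum
  have hgtail : (∑' k : ℕ, g (k+1)) ≤ 3/4 := by
    have step : (∑' k : ℕ, g (k+1))
        ≤ (3/4) * ∑' k : ℕ, (((k : ℝ) + 2) ^ 3) * ‖a (k + 2)‖ := by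
      rw [← tsum_mul_left]
      apply Summable.tsum_le_tsum _ hg1 (hsum.mul_left _)
      intro k
      simp only [hgdef]
      push_cast
      have h2 : (0:ℝ) ≤ (k:ℝ) := Nat.cast_nonneg k
      have : ((k:ℝ)+1+2)*((k:ℝ)+1+1) ≤ (3/4) * ((k:ℝ)+2)^3 := by
        nlinarith [pow_nonneg h2 3, sq_nonneg ((k:ℝ)), h2]
      calc (((k:ℝ)+1+2)*((k:ℝ)+1+1)) * ‖a (k+1+1)‖
          ≤ ((3/4) * ((k:ℝ)+2)^3) * ‖a (k+2)‖ := by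
            exact mul_le_mul_of_nonneg_right this (norm_nonneg _)
        _ = (3/4) * ((((k:ℝ)+2)^3) * ‖a (k+2)‖) := by ring
    linarith
  have hg0 : g 0 = 2 := by simp [hgdef, ha1]
  have hgt : (∑' k : ℕ, g k) ≤ 11/4 := by
    rw [Summable.tsum_eq_zero_add hgsum, hg0]
    linarith
  have hT2 : (∑' k : ℕ, (((k:ℝ)+2)^2) * ‖b (k+2)‖) ≤ ‖α‖ * (11/4) := by
    rw [heq2, tsum_mul_left]
    exact mul_le_mul_of_nonneg_left hgt (norm_nonneg _)
  constructor
  · rw [hsplit]; linarith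
  · linarith
end

section
/- Let h be analytic on the unit disk with h(0) = 0, h'(0) = 1, h'(z) ≠ 0, and Re(1 + z h''(z)/h'(z)) > -1/2 for all |z| < 1. Let g satisfy g'(z) = α z h'(z) with |α| ≤ 1, and let ε ∈ ℂ with |ε| = 1, F = h + εg. Then for all z = r e^{iθ} with 0 < r < 1: Re(1 + z F''(z)/F'(z)) = Re(αεz/(1+αεz)) + Re(1 + z h''(z)/h'(z)) > -(1/2)·P_ζ(θ), where ζ = -conj(αε)·r and P_ζ(θ) = (1-|ζ|²)/|e^{iθ} - ζ|² is the Poisson kernel. -/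
/-!
Since `F' = (1 + α ε z) h'`, the logarithmic derivative of `F'` splits off the term
`α ε / (1 + α ε z)`, giving the identity for `1 + z F''/F'`. For `w = α ε r e^{iθ}` one has
`Re (w / (1 + w)) = 1/2 - 1/2 · Re ((1 - w) / (1 + w))`, and conjugating and multiplying by
`e^{iθ}` turns `(1 - w) / (1 + w)` into the Herglotz–Riesz kernel `(e^{iθ} + ζ) / (e^{iθ} - ζ)`
with `ζ = -conj (α ε) r`, whose real part is the Poisson kernel `P_ζ(θ)`.
-/

open Complex Metric Filter Topology Set

section PreSchwarzian

variable {h g F : ℂ → ℂ} {U : Set ℂ} {α ε c z : ℂ}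

theorem eqOn_deriv_add_const_mul (hU : IsOpen U) (hh : DifferentiableOn ℂ h U)
    (hg : DifferentiableOn ℂ g U) (hg' : ∀ z ∈ U, deriv g z = α * z * deriv h z) :
    EqOn (deriv fun z => h z + ε * g z) (fun z => (1 + α * ε * z) * deriv h z) U := by
  intro z hz
  have hhz := hh.differentiableAt (hU.mem_nhds hz)
  have hgz := hg.differentiableAt (hU.mem_nhds hz)
  simp only [deriv_fun_add hhz (hgz.const_mul ε), deriv_const_mul ε hgz, hg' z hz]
  ring

theorem one_add_mul_deriv_deriv_div_deriv_of_eventuallyEq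
    (hF : deriv F =ᶠ[𝓝 z] fun w => (1 + c * w) * deriv h w)
    (hh : DifferentiableAt ℂ (deriv h) z) (hz : deriv h z ≠ 0) (hc : 1 + c * z ≠ 0) :
    1 + z * deriv (deriv F) z / deriv F z
      = c * z / (1 + c * z) + (1 + z * deriv (deriv h) z / deriv h z) := by
  have hF' : deriv (deriv F) z = c * deriv h z + (1 + c * z) * deriv (deriv h) z := by
    rw [hF.deriv_eq, deriv_fun_mul (by fun_prop) hh]
    simp
  rw [hF', hF.eq_of_nhds]
  have hc' : 1 + z * c ≠ 0 := by rwa [mul_comm]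
  field_simp
  ring

end PreSchwarzian

theorem poissonKernel_zero_exp_mul_I (ζ : ℂ) (θ : ℝ) :
    poissonKernel 0 ζ (exp (θ * I)) = (1 - ‖ζ‖ ^ 2) / ‖exp (θ * I) - ζ‖ ^ 2 := by
  simp [poissonKernel_def, norm_exp_ofReal_mul_I]

theorem re_div_one_add_eq_poissonKernel (c : ℂ) (r θ : ℝ)
    (hc : 1 + c * (r * exp (θ * I)) ≠ 0) :
    (c * (r * exp (θ * I)) / (1 + c * (r * exp (θ * I)))).re
      = 1 / 2 - 1 / 2 * poissonKernel 0 (-(starRingEnd ℂ c) * r) (exp (θ * I)) := by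
  set e := exp (θ * I)
  set w := c * (r * e)
  have he : e * starRingEnd ℂ e = 1 := by
    rw [mul_conj, normSq_eq_norm_sq, norm_exp_ofReal_mul_I]; simp
  have he0 : e ≠ 0 := exp_ne_zero _
  have hsplit : w / (1 + w) = 1 / 2 - 1 / 2 * ((1 - w) / (1 + w)) := by
    field_simp; ring
  set ζ := -(starRingEnd ℂ c) * r
  have hnum : e + ζ = e * starRingEnd ℂ (1 - w) := by
    simp only [ζ, w, map_sub, map_one, map_mul, conj_ofReal]
    linear_combination (starRingEnd ℂ c * r) * he
  have hden : e - ζ = e * starRingEnd ℂ (1 + w) := by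
    simp only [ζ, w, map_add, map_one, map_mul, conj_ofReal]
    linear_combination (-(starRingEnd ℂ c * r)) * he
  have hkernel : herglotzRieszKernel 0 ζ e = starRingEnd ℂ ((1 - w) / (1 + w)) := by
    rw [herglotzRieszKernel_def, sub_zero, sub_zero, hnum, hden, mul_div_mul_left _ _ he0,
      map_div₀]
  rw [hsplit, poissonKernel_eq_re_herglotzRieszKernel, Function.comp_apply, hkernel, conj_re]
  simp

theorem stmt5_general
    (h g : ℂ → ℂ) (α ε : ℂ)
    (hα : ‖α‖ ≤ 1) (hε : ‖ε‖ = 1)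
    (hha : AnalyticOn ℂ h (ball (0 : ℂ) 1))
    (hga : AnalyticOn ℂ g (ball (0 : ℂ) 1))
    (hne : ∀ z ∈ ball (0 : ℂ) 1, deriv h z ≠ 0)
    (hre : ∀ z ∈ ball (0 : ℂ) 1,
      (1 + z * deriv (deriv h) z / deriv h z).re > -(1 / 2))
    (hderiv : ∀ z ∈ ball (0 : ℂ) 1, deriv g z = α * z * deriv h z)
    (F : ℂ → ℂ) (hF : ∀ z, F z = h z + ε * g z) :
    ∀ r θ : ℝ, 0 < r → r < 1 →
      (1 + (r * exp (θ * I)) * deriv (deriv F) (r * exp (θ * I)) /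
          deriv F (r * exp (θ * I))).re
        = (α * ε * (r * exp (θ * I)) / (1 + α * ε * (r * exp (θ * I)))).re +
          (1 + (r * exp (θ * I)) * deriv (deriv h) (r * exp (θ * I)) /
            deriv h (r * exp (θ * I))).re ∧
      (1 + (r * exp (θ * I)) * deriv (deriv F) (r * exp (θ * I)) /
          deriv F (r * exp (θ * I))).re
        > -(1 / 2) * ((1 - ‖-(starRingEnd ℂ (α * ε)) * r‖ ^ 2) /
            ‖exp (θ * I) - (-(starRingEnd ℂ (α * ε)) * r)‖ ^ 2) := by
  intro r θ hr hr1
  obtain rfl : F = fun z => h z + ε * g z := funext hF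
  set z : ℂ := r * exp (θ * I)
  have hzr : ‖z‖ = r := by simp [z, norm_exp_ofReal_mul_I, hr.le]
  have hz : z ∈ ball (0 : ℂ) 1 := by simpa [hzr] using hr1
  have hw : ‖α * ε * z‖ < 1 := by
    rw [norm_mul, norm_mul, hε, hzr, mul_one]; nlinarith [norm_nonneg α]
  have hw0 : 1 + α * ε * z ≠ 0 := fun h0 => by
    simp [eq_neg_of_add_eq_zero_right h0] at hw
  have hid := one_add_mul_deriv_deriv_div_deriv_of_eventuallyEq
    (eventually_of_mem (isOpen_ball.mem_nhds hz)
      (eqOn_deriv_add_const_mul isOpen_ball hha.differentiableOn hga.differentiableOn hderiv))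
    ((hha.differentiableOn.deriv isOpen_ball).differentiableAt (isOpen_ball.mem_nhds hz))
    (hne z hz) hw0
  have hP := re_div_one_add_eq_poissonKernel (α * ε) r θ hw0
  rw [poissonKernel_zero_exp_mul_I] at hP
  refine ⟨by rw [hid, add_re], ?_⟩
  rw [hid, add_re]
  linarith [hre z hz]

theorem stmt5
    (h g : ℂ → ℂ) (α ε : ℂ)
    (hα : ‖α‖ ≤ 1) (hε : ‖ε‖ = 1)
    (hha : AnalyticOn ℂ h (ball (0 : ℂ) 1))
    (hga : AnalyticOn ℂ g (ball (0 : ℂ) 1))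
    (h0 : h 0 = 0) (h1 : deriv h 0 = 1)
    (hne : ∀ z ∈ ball (0 : ℂ) 1, deriv h z ≠ 0)
    (hre : ∀ z ∈ ball (0 : ℂ) 1,
      (1 + z * deriv (deriv h) z / deriv h z).re > -(1 / 2))
    (hderiv : ∀ z ∈ ball (0 : ℂ) 1, deriv g z = α * z * deriv h z)
    (F : ℂ → ℂ) (hF : ∀ z, F z = h z + ε * g z) :
    ∀ r θ : ℝ, 0 < r → r < 1 →
      (1 + (r * exp (θ * I)) * deriv (deriv F) (r * exp (θ * I)) /
          deriv F (r * exp (θ * I))).re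
        = (α * ε * (r * exp (θ * I)) / (1 + α * ε * (r * exp (θ * I)))).re +
          (1 + (r * exp (θ * I)) * deriv (deriv h) (r * exp (θ * I)) /
            deriv h (r * exp (θ * I))).re ∧
      (1 + (r * exp (θ * I)) * deriv (deriv F) (r * exp (θ * I)) /
          deriv F (r * exp (θ * I))).re
        > -(1 / 2) * ((1 - ‖-(starRingEnd ℂ (α * ε)) * r‖ ^ 2) /
            ‖exp (θ * I) - (-(starRingEnd ℂ (α * ε)) * r)‖ ^ 2) :=
  stmt5_general h g α ε hα hε hha hga hne hre hderiv F hF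
end

section
/- If f = h + conj(g) ∈ M(α) with |α| ≤ 1, where h(z) = z + Σ_{n≥2} aₙzⁿ and g(z) = Σ_{n≥1} bₙzⁿ, and the coefficient bounds |aₙ| ≤ (n+1)/2 hold for n ≥ 2, then |bₙ| ≤ ((n-1)/2)|α| for all n ≥ 2 and b₁ = 0. -/
open Complex Metric Filter Topology Nat

/-!
Differentiating `g' = α z h'` at the origin with the Leibniz rule gives `(n + 1) b_{n+1} = n α a_n`.
Hence `b₁ = 0`, and `|b_n| = ((n - 1) / n) |α| |a_{n-1}| ≤ ((n - 1) / 2) |α|` since `|a_{n-1}| ≤ n / 2`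
(for `n = 2` because `a₁ = h'(0) = 1`).
-/

section
variable {𝕜 : Type*} [NontriviallyNormedField 𝕜]

theorem iteratedDeriv_succ_id_mul {n : ℕ} {u : 𝕜 → 𝕜} {x : 𝕜}
    (hu : ContDiffAt 𝕜 (n + 1) u x) :
    iteratedDeriv (n + 1) (fun z => z * u z) x =
      (n + 1) * iteratedDeriv n u x + x * iteratedDeriv (n + 1) u x := by
  rw [show (fun z => z * u z) = id * u from rfl, iteratedDeriv_mul contDiffAt_id hu,
    Finset.sum_range_succ' _ (n + 1), Finset.sum_range_succ' _ n, Finset.sum_eq_zero]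
  · simp [iteratedDeriv_id]
  · intro i _
    simp [iteratedDeriv_id]

theorem iteratedDeriv_add_two_of_deriv_eq {n : ℕ} {g h : 𝕜 → 𝕜} {α : 𝕜}
    (hh : ContDiffAt 𝕜 (n + 1) (deriv h) 0)
    (hg : deriv g =ᶠ[𝓝 0] fun z => α * (z * deriv h z)) :
    iteratedDeriv (n + 2) g 0 = α * ((n + 1) * iteratedDeriv (n + 1) h 0) := by
  rw [iteratedDeriv_succ', hg.iteratedDeriv_eq, iteratedDeriv_const_mul_field,
    iteratedDeriv_succ_id_mul hh, ← iteratedDeriv_succ', zero_mul, add_zero]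

theorem iteratedDeriv_div_factorial_add_two_of_deriv_eq [CharZero 𝕜] {n : ℕ} {g h : 𝕜 → 𝕜}
    {α : 𝕜} (hh : ContDiffAt 𝕜 (n + 1) (deriv h) 0)
    (hg : deriv g =ᶠ[𝓝 0] fun z => α * (z * deriv h z)) :
    (n + 2) * (iteratedDeriv (n + 2) g 0 / (n + 2)!) =
      α * (n + 1) * (iteratedDeriv (n + 1) h 0 / (n + 1)!) := by
  have hn : (n + 2 : 𝕜) ≠ 0 := by exact_mod_cast (n + 1).succ_ne_zero
  rw [iteratedDeriv_add_two_of_deriv_eq hh hg, factorial_succ (n + 1)]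
  push_cast
  rw [add_assoc, one_add_one_eq_two]
  field_simp

end

theorem stmt7_general
    (h g : ℂ → ℂ) (α : ℂ)
    (hha : AnalyticOn ℂ h (ball (0 : ℂ) 1))
    (h1 : deriv h 0 = 1)
    (hderiv : ∀ z ∈ ball (0 : ℂ) 1, deriv g z = α * z * deriv h z)
    (a b : ℕ → ℂ)
    (ha : ∀ n, a n = iteratedDeriv n h 0 / (n.factorial : ℂ))
    (hb : ∀ n, b n = iteratedDeriv n g 0 / (n.factorial : ℂ))
    (habound : ∀ n : ℕ, 2 ≤ n → ‖a n‖ ≤ ((n : ℝ) + 1) / 2) :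
    b 1 = 0 ∧ ∀ n : ℕ, 2 ≤ n → ‖b n‖ ≤ (((n : ℝ) - 1) / 2) * ‖α‖ := by
  have hg : deriv g =ᶠ[𝓝 0] fun z => α * (z * deriv h z) :=
    eventually_of_mem (ball_mem_nhds 0 one_pos) fun z hz => (hderiv z hz).trans (mul_assoc _ _ _)
  have hh' : AnalyticAt ℂ (deriv h) 0 := (hha.analyticAt (ball_mem_nhds 0 one_pos)).deriv
  refine ⟨by simpa [hb, iteratedDeriv_one] using hderiv 0 (mem_ball_self one_pos), fun n hn => ?_⟩
  obtain ⟨m, rfl⟩ := Nat.exists_eq_add_of_le' hn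
  have hrel : ((m + 2 : ℕ) : ℂ) * b (m + 2) = α * ((m + 1 : ℕ) : ℂ) * a (m + 1) := by
    rw [ha, hb]
    exact_mod_cast iteratedDeriv_div_factorial_add_two_of_deriv_eq hh'.contDiffAt hg
  have ha_le : ‖a (m + 1)‖ ≤ ((m : ℝ) + 2) / 2 := by
    rcases m with _ | k
    · norm_num [ha, h1]
    · have := habound (k + 2) (by omega)
      push_cast at this ⊢
      linarith
  have hnorm := congrArg norm hrel
  simp only [norm_mul, Complex.norm_natCast] at hnorm
  push_cast at hnorm ⊢
  refine le_of_mul_le_mul_left ?_ (by positivity : (0 : ℝ) < m + 2)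
  calc ((m : ℝ) + 2) * ‖b (m + 2)‖ = ‖α‖ * ((m : ℝ) + 1) * ‖a (m + 1)‖ := hnorm
    _ ≤ ‖α‖ * ((m : ℝ) + 1) * (((m : ℝ) + 2) / 2) := by gcongr
    _ = ((m : ℝ) + 2) * (((m : ℝ) + 2 - 1) / 2 * ‖α‖) := by ring

theorem stmt7
    (h g : ℂ → ℂ) (α : ℂ) (hα : ‖α‖ ≤ 1)
    (hha : AnalyticOn ℂ h (ball (0 : ℂ) 1))
    (hga : AnalyticOn ℂ g (ball (0 : ℂ) 1))
    (h0 : h 0 = 0) (h1 : deriv h 0 = 1) (g0 : g 0 = 0)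
    (hderiv : ∀ z ∈ ball (0 : ℂ) 1, deriv g z = α * z * deriv h z)
    (hre : ∀ z ∈ ball (0 : ℂ) 1,
      (1 + z * deriv (deriv h) z / deriv h z).re > -(1 / 2))
    (a b : ℕ → ℂ)
    (ha : ∀ n, a n = iteratedDeriv n h 0 / (n.factorial : ℂ))
    (hb : ∀ n, b n = iteratedDeriv n g 0 / (n.factorial : ℂ))
    (habound : ∀ n : ℕ, 2 ≤ n → ‖a n‖ ≤ ((n : ℝ) + 1) / 2) :
    b 1 = 0 ∧ ∀ n : ℕ, 2 ≤ n → ‖b n‖ ≤ (((n : ℝ) - 1) / 2) * ‖α‖ :=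
  stmt7_general h g α hha h1 hderiv a b ha hb habound
end

section
/- Let |α| ≤ 1 and let (aₙ), (bₙ) satisfy |aₙ| ≤ (n+1)/2 and |bₙ| ≤ ((n-1)/2)|α| for n ≥ 2, with a₁ = 1, b₁ = 0. Then for |z| < 1: |z| + Σ_{n≥2}(|aₙ| + |bₙ|)|z|ⁿ ≤ (|z|/(1-|z|)²)·(1 - (1/2)(1-|α|)|z|). In particular any f ∈ M(α) satisfies |f(z)| ≤ (|z|/(1-|z|)²)(1 - (1-|α|)|z|/2). -/
/-!
Since `‖aₙ‖ + ‖bₙ‖ ≤ (1 + ‖α‖)/2 · n + (1 - ‖α‖)/2`, the series `∑ (‖aₙ‖ + ‖bₙ‖) rⁿ` is dominated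
termwise by a combination of `∑ n rⁿ = r/(1-r)²` and `∑ rⁿ = 1/(1-r)`, whose closed form is the
stated bound. The estimate for `f` is then the triangle inequality applied to its series.
-/

open Complex Metric

section NormedDivisionRing

variable {𝕜 : Type*} [NormedDivisionRing 𝕜] {r : 𝕜}

theorem hasSum_coe_add_two_mul_geometric (hr : ‖r‖ < 1) :
    HasSum (fun k : ℕ => ((k : 𝕜) + 2) * r ^ (k + 2)) (r / (1 - r) ^ 2 - r) := by
  have h := (hasSum_nat_add_iff' (f := fun n : ℕ => (n : 𝕜) * r ^ n) 2).2
    (hasSum_coe_mul_geometric_of_norm_lt_one hr)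
  simpa [Finset.sum_range_succ] using h

theorem hasSum_geometric_add_two (hr : ‖r‖ < 1) :
    HasSum (fun k : ℕ => r ^ (k + 2)) ((1 - r)⁻¹ * r ^ 2) := by
  simpa [pow_add] using (hasSum_geometric_of_norm_lt_one hr).mul_right (r ^ 2)

end NormedDivisionRing

section Real

variable {r : ℝ}

/-- With `n = k + 2`, the coefficient is `(n + 1)/2 + (n - 1)/2 · s`. -/
theorem hasSum_affine_mul_geometric_add_two (s : ℝ) (hr : ‖r‖ < 1) :
    HasSum (fun k : ℕ => (((k : ℝ) + 3) / 2 + ((k : ℝ) + 1) / 2 * s) * r ^ (k + 2))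
      (r / (1 - r) ^ 2 * (1 - 1 / 2 * (1 - s) * r) - r) := by
  have h := ((hasSum_coe_add_two_mul_geometric hr).mul_left ((1 + s) / 2)).add
    ((hasSum_geometric_add_two hr).mul_left ((1 - s) / 2))
  have h1r : 1 - r ≠ 0 := by linarith [le_abs_self r, Real.norm_eq_abs r]
  have hval : r / (1 - r) ^ 2 * (1 - 1 / 2 * (1 - s) * r) - r
      = (1 + s) / 2 * (r / (1 - r) ^ 2 - r) + (1 - s) / 2 * ((1 - r)⁻¹ * r ^ 2) := by
    field_simp
    ring
  rw [hval]
  exact h.congr_fun fun k => by ring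

theorem summable_and_add_tsum_le_of_le_affine {c : ℕ → ℝ} {s : ℝ} (hr0 : 0 ≤ r) (hr1 : r < 1)
    (hc0 : ∀ k, 0 ≤ c k) (hc : ∀ k, c k ≤ ((k : ℝ) + 3) / 2 + ((k : ℝ) + 1) / 2 * s) :
    Summable (fun k => c k * r ^ (k + 2)) ∧
      r + ∑' k, c k * r ^ (k + 2) ≤ r / (1 - r) ^ 2 * (1 - 1 / 2 * (1 - s) * r) := by
  have hmaj := hasSum_affine_mul_geometric_add_two s (by rwa [Real.norm_of_nonneg hr0])
  have hle : ∀ k, c k * r ^ (k + 2) ≤ (((k : ℝ) + 3) / 2 + ((k : ℝ) + 1) / 2 * s) * r ^ (k + 2) :=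
    fun k => mul_le_mul_of_nonneg_right (hc k) (by positivity)
  have hsum : Summable (fun k => c k * r ^ (k + 2)) :=
    .of_nonneg_of_le (fun k => mul_nonneg (hc0 k) (by positivity)) hle hmaj.summable
  refine ⟨hsum, ?_⟩
  linarith [hasSum_le hle hsum.hasSum hmaj]

end Real

theorem norm_tsum_add_norm_tsum_le {E : Type*} [SeminormedAddCommGroup E] {u v : ℕ → E}
    (h : Summable (fun k => ‖u k‖ + ‖v k‖)) :
    ‖∑' k, u k‖ + ‖∑' k, v k‖ ≤ ∑' k, (‖u k‖ + ‖v k‖) := by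
  have hu : Summable (fun k => ‖u k‖) :=
    .of_nonneg_of_le (fun _ => norm_nonneg _) (fun k => le_add_of_nonneg_right (norm_nonneg _)) h
  have hv : Summable (fun k => ‖v k‖) :=
    .of_nonneg_of_le (fun _ => norm_nonneg _) (fun k => le_add_of_nonneg_left (norm_nonneg _)) h
  rw [hu.tsum_add hv]
  exact add_le_add (norm_tsum_le_tsum_norm hu) (norm_tsum_le_tsum_norm hv)

theorem stmt8_general
    (α : ℂ)
    (a b : ℕ → ℂ)
    (habound : ∀ n : ℕ, 2 ≤ n → ‖a n‖ ≤ ((n : ℝ) + 1) / 2)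
    (hbbound : ∀ n : ℕ, 2 ≤ n → ‖b n‖ ≤ (((n : ℝ) - 1) / 2) * ‖α‖)
    (f : ℂ → ℂ)
    (hf : ∀ z ∈ ball (0 : ℂ) 1,
      f z = z + (∑' k : ℕ, a (k + 2) * z ^ (k + 2)) +
        (starRingEnd ℂ) (∑' k : ℕ, b (k + 2) * z ^ (k + 2))) :
    ∀ z : ℂ, ‖z‖ < 1 →
      ‖z‖ + (∑' k : ℕ, (‖a (k + 2)‖ + ‖b (k + 2)‖) * ‖z‖ ^ (k + 2))
          ≤ ‖z‖ / (1 - ‖z‖) ^ 2 * (1 - 1 / 2 * (1 - ‖α‖) * ‖z‖) ∧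
        ‖f z‖ ≤ ‖z‖ / (1 - ‖z‖) ^ 2 * (1 - 1 / 2 * (1 - ‖α‖) * ‖z‖) := by
  intro z hz
  have hcoef (k : ℕ) :
      ‖a (k + 2)‖ + ‖b (k + 2)‖ ≤ ((k : ℝ) + 3) / 2 + ((k : ℝ) + 1) / 2 * ‖α‖ := by
    have ha := habound (k + 2) (by omega)
    have hb := hbbound (k + 2) (by omega)
    push_cast at ha hb
    linarith
  obtain ⟨hsum, hbound⟩ := summable_and_add_tsum_le_of_le_affine (norm_nonneg z) hz
    (fun k => by positivity) hcoef
  refine ⟨hbound, ?_⟩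
  have hsum' : Summable (fun k => ‖a (k + 2) * z ^ (k + 2)‖ + ‖b (k + 2) * z ^ (k + 2)‖) := by
    simpa only [norm_mul, norm_pow, add_mul] using hsum
  calc ‖f z‖
      ≤ ‖z‖ + (‖∑' k, a (k + 2) * z ^ (k + 2)‖ + ‖∑' k, b (k + 2) * z ^ (k + 2)‖) := by
        rw [hf z (mem_ball_zero_iff.2 hz), add_assoc, ← RCLike.norm_conj (∑' k, b (k + 2) * _)]
        exact (norm_add_le _ _).trans (by gcongr; exact norm_add_le _ _)
    _ ≤ ‖z‖ + ∑' k, (‖a (k + 2)‖ + ‖b (k + 2)‖) * ‖z‖ ^ (k + 2) := by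
        gcongr
        simpa only [norm_mul, norm_pow, add_mul] using norm_tsum_add_norm_tsum_le hsum'
    _ ≤ _ := hbound

theorem stmt8
    (α : ℂ) (hα : ‖α‖ ≤ 1)
    (a b : ℕ → ℂ) (ha1 : a 1 = 1) (hb1 : b 1 = 0)
    (habound : ∀ n : ℕ, 2 ≤ n → ‖a n‖ ≤ ((n : ℝ) + 1) / 2)
    (hbbound : ∀ n : ℕ, 2 ≤ n → ‖b n‖ ≤ (((n : ℝ) - 1) / 2) * ‖α‖)
    (f : ℂ → ℂ)
    (hf : ∀ z ∈ ball (0 : ℂ) 1,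
      f z = z + (∑' k : ℕ, a (k + 2) * z ^ (k + 2)) +
        (starRingEnd ℂ) (∑' k : ℕ, b (k + 2) * z ^ (k + 2))) :
    ∀ z : ℂ, ‖z‖ < 1 →
      ‖z‖ + (∑' k : ℕ, (‖a (k + 2)‖ + ‖b (k + 2)‖) * ‖z‖ ^ (k + 2))
          ≤ ‖z‖ / (1 - ‖z‖) ^ 2 * (1 - 1 / 2 * (1 - ‖α‖) * ‖z‖) ∧
        ‖f z‖ ≤ ‖z‖ / (1 - ‖z‖) ^ 2 * (1 - 1 / 2 * (1 - ‖α‖) * ‖z‖) :=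
  stmt8_general α a b habound hbbound f hf
end

section
/- Let h(z) = (1/2)(z/(1-z) + z/(1-z)²) and g(z) = -(α/2)(z/(1-z) - z/(1-z)²) for |α| ≤ 1. Then g'(z) = α z h'(z) and Re(1 + z h''(z)/h'(z)) > -1/2 for all |z| < 1; i.e., f_α = h + conj(g) belongs to M(α). -/
open Complex

/-!
Both functions are rational with their only pole at `1`, and a direct computation gives
`h' = (1 - z)⁻³`, `g' = α z (1 - z)⁻³` and `1 + z h''/h' = (1 + 2z)/(1 - z) = (3/2)·(1 + z)/(1 - z) - 1/2`.
The map `z ↦ (1 + z)/(1 - z)` sends the unit disc into the right half-plane, since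
`Re ((1 + z)/(1 - z)) = (1 - |z|²)/|1 - z|²`.
-/

noncomputable def analyticPart (z : ℂ) : ℂ := (1 / 2) * (z / (1 - z) + z / (1 - z) ^ 2)

noncomputable def coanalyticPart (α z : ℂ) : ℂ := -(α / 2) * (z / (1 - z) - z / (1 - z) ^ 2)

section Derivatives

variable {z : ℂ}

lemma hasDerivAt_one_sub (z : ℂ) : HasDerivAt (fun w : ℂ => 1 - w) (-1) z := by
  simpa using (hasDerivAt_id z).const_sub 1

lemma hasDerivAt_div_one_sub (hz : 1 - z ≠ 0) :
    HasDerivAt (fun w : ℂ => w / (1 - w)) ((1 - z) ^ 2)⁻¹ z := by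
  refine ((hasDerivAt_id' z).div (hasDerivAt_one_sub z) hz).congr_deriv ?_
  field_simp
  ring

lemma hasDerivAt_div_one_sub_sq (hz : 1 - z ≠ 0) :
    HasDerivAt (fun w : ℂ => w / (1 - w) ^ 2) ((1 + z) / (1 - z) ^ 3) z := by
  refine ((hasDerivAt_id' z).div ((hasDerivAt_one_sub z).fun_pow 2)
    (pow_ne_zero 2 hz)).congr_deriv ?_
  field_simp
  ring

lemma hasDerivAt_inv_one_sub_pow (n : ℕ) (hz : 1 - z ≠ 0) :
    HasDerivAt (fun w : ℂ => ((1 - w) ^ n)⁻¹) (n * ((1 - z) ^ (n + 1))⁻¹) z := by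
  refine (((hasDerivAt_one_sub z).fun_pow n).inv (pow_ne_zero n hz)).congr_deriv ?_
  rcases n with _ | n
  · simp
  · simp only [Nat.add_sub_cancel]
    field_simp
    ring

lemma hasDerivAt_analyticPart (hz : 1 - z ≠ 0) :
    HasDerivAt analyticPart ((1 - z) ^ 3)⁻¹ z := by
  refine (((hasDerivAt_div_one_sub hz).add (hasDerivAt_div_one_sub_sq hz)).const_mul
    (1 / 2 : ℂ)).congr_deriv ?_
  field_simp
  ring

lemma hasDerivAt_coanalyticPart (α : ℂ) (hz : 1 - z ≠ 0) :
    HasDerivAt (coanalyticPart α) (α * z * ((1 - z) ^ 3)⁻¹) z := by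
  refine (((hasDerivAt_div_one_sub hz).sub (hasDerivAt_div_one_sub_sq hz)).const_mul
    (-(α / 2))).congr_deriv ?_
  field_simp
  ring

lemma deriv_deriv_analyticPart (hz : 1 - z ≠ 0) :
    deriv (deriv analyticPart) z = 3 * ((1 - z) ^ 4)⁻¹ := by
  have near : deriv analyticPart =ᶠ[nhds z] fun w => ((1 - w) ^ 3)⁻¹ := by
    filter_upwards [(hasDerivAt_one_sub z).continuousAt.eventually_ne hz] with w hw
    exact (hasDerivAt_analyticPart hw).deriv
  rw [near.deriv_eq]
  exact_mod_cast (hasDerivAt_inv_one_sub_pow 3 hz).deriv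

end Derivatives

lemma one_sub_ne_zero_of_norm_lt_one {z : ℂ} (hz : ‖z‖ < 1) : 1 - z ≠ 0 := by
  rw [sub_ne_zero]
  rintro rfl
  simp at hz

lemma re_one_add_div_one_sub_pos {z : ℂ} (hz : ‖z‖ < 1) : 0 < ((1 + z) / (1 - z)).re := by
  have hre : ((1 + z) / (1 - z)).re = (1 - ‖z‖ ^ 2) / normSq (1 - z) := by
    rw [div_re, Complex.sq_norm, normSq_apply, normSq_apply]
    simp only [add_re, sub_re, one_re, add_im, sub_im, one_im]
    ring
  rw [hre]
  have : ‖z‖ ^ 2 < 1 := pow_lt_one₀ (norm_nonneg z) hz two_ne_zero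
  exact div_pos (by linarith) (normSq_pos.mpr (one_sub_ne_zero_of_norm_lt_one hz))

theorem stmt10_general
    (α : ℂ)
    (h g : ℂ → ℂ)
    (hh : ∀ z, h z = (1 / 2) * (z / (1 - z) + z / (1 - z) ^ 2))
    (hg : ∀ z, g z = -(α / 2) * (z / (1 - z) - z / (1 - z) ^ 2)) :
    h 0 = 0 ∧ deriv h 0 = 1 ∧ g 0 = 0 ∧
      (∀ z : ℂ, ‖z‖ < 1 → deriv g z = α * z * deriv h z) ∧
      (∀ z : ℂ, ‖z‖ < 1 →
        (1 + z * deriv (deriv h) z / deriv h z).re > -(1 / 2)) := by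
  obtain rfl : h = analyticPart := funext hh
  obtain rfl : g = coanalyticPart α := funext hg
  refine ⟨by simp [analyticPart], ?_, by simp [coanalyticPart], fun z hz => ?_, fun z hz => ?_⟩
  · simp [(hasDerivAt_analyticPart (by norm_num : (1 : ℂ) - 0 ≠ 0)).deriv]
  · have hz1 := one_sub_ne_zero_of_norm_lt_one hz
    rw [(hasDerivAt_coanalyticPart α hz1).deriv, (hasDerivAt_analyticPart hz1).deriv]
  · have hz1 := one_sub_ne_zero_of_norm_lt_one hz
    have cayley : 1 + z * deriv (deriv analyticPart) z / deriv analyticPart z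
        = 3 / 2 * ((1 + z) / (1 - z)) - 1 / 2 := by
      rw [deriv_deriv_analyticPart hz1, (hasDerivAt_analyticPart hz1).deriv]
      field_simp
      ring
    rw [cayley]
    norm_num [mul_re]
    exact re_one_add_div_one_sub_pos hz

theorem stmt10
    (α : ℂ) (hα : ‖α‖ ≤ 1)
    (h g : ℂ → ℂ)
    (hh : ∀ z, h z = (1 / 2) * (z / (1 - z) + z / (1 - z) ^ 2))
    (hg : ∀ z, g z = -(α / 2) * (z / (1 - z) - z / (1 - z) ^ 2)) :
    h 0 = 0 ∧ deriv h 0 = 1 ∧ g 0 = 0 ∧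
      (∀ z : ℂ, ‖z‖ < 1 → deriv g z = α * z * deriv h z) ∧
      (∀ z : ℂ, ‖z‖ < 1 →
        (1 + z * deriv (deriv h) z / deriv h z).re > -(1 / 2)) :=
  stmt10_general α h g hh hg
end

section
/- The polynomial p(r, u) = 1 + 4r² - 26r⁴ + 4r⁶ + r⁸ - 6ur(1+r²)(1 - 6r² + r⁴) - 12r²u²(1+r²)² + 4ru³(1+r²)(1+r⁴) satisfies: for 0 < r < 1, p(r, u) ≥ 0 for all u ∈ [-1, 1] if and only if r ≤ 2 - √3. Moreover p(r, -1) = (1+r)⁶(1 - 4r + r²). -/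
lemma key_ineq (r u : ℝ) (hr : 0 ≤ r) (hR : r ≤ 27/100)
    (hq : 0 ≤ 1 - 4*r + r^2) (ht : (0:ℝ) ≤ 1 + u) (hT : (0:ℝ) ≤ 1 - u) :
    0 ≤ 1 + 4 * r ^ 2 - 26 * r ^ 4 + 4 * r ^ 6 + r ^ 8
        - 6 * u * r * (1 + r ^ 2) * (1 - 6 * r ^ 2 + r ^ 4)
        - 12 * r ^ 2 * u ^ 2 * (1 + r ^ 2) ^ 2
        + 4 * r * u ^ 3 * (1 + r ^ 2) * (1 + r ^ 4) := by
  have hR' : (0:ℝ) ≤ 27/100 - r := by linarith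
  have hR := hR'
  have f0 : (0:ℝ) ≤ r*(1+u)^3 := mul_nonneg hr (pow_nonneg ht 3)
  have f1 : (0:ℝ) ≤ r^7*(1+u)^3 := mul_nonneg (pow_nonneg hr 7) (pow_nonneg ht 3)
  have f2 : (0:ℝ) ≤ (27/100-r)^2*(1-4*r+r^2) := mul_nonneg (sq_nonneg _) hq
  have f3 : (0:ℝ) ≤ (27/100-r)*(1-4*r+r^2)*r*(1+u) := mul_nonneg (mul_nonneg (mul_nonneg hR hq) hr) ht
  have f4 : (0:ℝ) ≤ (27/100-r)*(1-4*r+r^2)*r^2 := mul_nonneg (mul_nonneg hR hq) (pow_nonneg hr 2)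
  have f5 : (0:ℝ) ≤ (27/100-r)*(1-4*r+r^2)*r^3 := mul_nonneg (mul_nonneg hR hq) (pow_nonneg hr 3)
  have f6 : (0:ℝ) ≤ (27/100-r)*(1-4*r+r^2)*r^4 := mul_nonneg (mul_nonneg hR hq) (pow_nonneg hr 4)
  have f7 : (0:ℝ) ≤ (1-u)^2*r^1*(1+u) := mul_nonneg (mul_nonneg (sq_nonneg _) (pow_nonneg hr 1)) ht
  have f8 : (0:ℝ) ≤ (1-u)^2*r^2*(1+u) := mul_nonneg (mul_nonneg (sq_nonneg _) (pow_nonneg hr 2)) ht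
  have f9 : (0:ℝ) ≤ (1-u)^2*r^3*(1+u) := mul_nonneg (mul_nonneg (sq_nonneg _) (pow_nonneg hr 3)) ht
  have f10 : (0:ℝ) ≤ (1-u)^2*r^4*(1+u) := mul_nonneg (mul_nonneg (sq_nonneg _) (pow_nonneg hr 4)) ht
  have f11 : (0:ℝ) ≤ (1-u)^2*r^5*(1+u) := mul_nonneg (mul_nonneg (sq_nonneg _) (pow_nonneg hr 5)) ht
  have f12 : (0:ℝ) ≤ (1-u)^2*r^6*(1+u) := mul_nonneg (mul_nonneg (sq_nonneg _) (pow_nonneg hr 6)) ht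
  have f13 : (0:ℝ) ≤ (1-u)^2*r^7*(1+u) := mul_nonneg (mul_nonneg (sq_nonneg _) (pow_nonneg hr 7)) ht
  have f14 : (0:ℝ) ≤ (1-u)^2*(1-4*r+r^2)*r := mul_nonneg (mul_nonneg (sq_nonneg _) hq) hr
  have f15 : (0:ℝ) ≤ (1-u)*(1-4*r+r^2)*r^2 := mul_nonneg (mul_nonneg hT hq) (pow_nonneg hr 2)
  have f16 : (0:ℝ) ≤ (1-u)*(1-4*r+r^2)*r^3 := mul_nonneg (mul_nonneg hT hq) (pow_nonneg hr 3)
  have f17 : (0:ℝ) ≤ (1-u)*(1-4*r+r^2)*r^4 := mul_nonneg (mul_nonneg hT hq) (pow_nonneg hr 4)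
  have f18 : (0:ℝ) ≤ (1-u)*(1-4*r+r^2)*r^5 := mul_nonneg (mul_nonneg hT hq) (pow_nonneg hr 5)
  have f19 : (0:ℝ) ≤ (1-4*r+r^2)*r^1*(1+u)^3 := mul_nonneg (mul_nonneg hq (pow_nonneg hr 1)) (pow_nonneg ht 3)
  have f20 : (0:ℝ) ≤ (1-4*r+r^2)*r^2*(1+u)^3 := mul_nonneg (mul_nonneg hq (pow_nonneg hr 2)) (pow_nonneg ht 3)
  have f21 : (0:ℝ) ≤ (1-4*r+r^2)*r^3*(1+u)^3 := mul_nonneg (mul_nonneg hq (pow_nonneg hr 3)) (pow_nonneg ht 3)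
  have f22 : (0:ℝ) ≤ (1-4*r+r^2)*r^4*(1+u)^3 := mul_nonneg (mul_nonneg hq (pow_nonneg hr 4)) (pow_nonneg ht 3)
  have f23 : (0:ℝ) ≤ (1-4*r+r^2)*r^5*(1+u)^3 := mul_nonneg (mul_nonneg hq (pow_nonneg hr 5)) (pow_nonneg ht 3)
  have f24 : (0:ℝ) ≤ (1-4*r+r^2)^2 := sq_nonneg _
  have f25 : (0:ℝ) ≤ (1-4*r+r^2)^2*r^4 := mul_nonneg (sq_nonneg _) (pow_nonneg hr 4)
  linarith [f0, f1, f2, f3, f4, f5, f6, f7, f8, f9, f10, f11, f12, f13, f14, f15, f16, f17, f18, f19, f20, f21, f22, f23, f24, f25]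

theorem stmt13
    (p : ℝ → ℝ → ℝ)
    (hp : ∀ r u : ℝ, p r u =
      1 + 4 * r ^ 2 - 26 * r ^ 4 + 4 * r ^ 6 + r ^ 8
        - 6 * u * r * (1 + r ^ 2) * (1 - 6 * r ^ 2 + r ^ 4)
        - 12 * r ^ 2 * u ^ 2 * (1 + r ^ 2) ^ 2
        + 4 * r * u ^ 3 * (1 + r ^ 2) * (1 + r ^ 4)) :
    ∀ r : ℝ, 0 < r → r < 1 →
      ((∀ u ∈ Set.Icc (-1 : ℝ) 1, 0 ≤ p r u) ↔ r ≤ 2 - Real.sqrt 3) ∧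
        p r (-1) = (1 + r) ^ 6 * (1 - 4 * r + r ^ 2) := by
  intro r hr0 hr1
  have hs : Real.sqrt 3 ^ 2 = 3 := Real.sq_sqrt (by norm_num)
  have hs0 : 0 ≤ Real.sqrt 3 := Real.sqrt_nonneg 3
  have hfac : p r (-1) = (1 + r) ^ 6 * (1 - 4 * r + r ^ 2) := by rw [hp]; ring
  refine ⟨⟨fun h => ?_, fun h => ?_⟩, hfac⟩
  · have h1 := h (-1) ⟨le_refl _, by norm_num⟩
    rw [hfac] at h1
    have hq : 0 ≤ 1 - 4*r + r^2 := by
      by_contra hq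
      push_neg at hq
      have hA : 0 < (1 + r)^6 := by positivity
      nlinarith
    by_contra hc
    push_neg at hc
    nlinarith [sq_nonneg (2 - r - Real.sqrt 3)]
  · have hq : 0 ≤ 1 - 4*r + r^2 := by nlinarith
    have hR : r ≤ 27/100 := by nlinarith
    intro u hu
    rw [hp]
    exact key_ineq r u hr0.le hR hq (by linarith [hu.1]) (by linarith [hu.2])
end
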